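/- arXiv:1510.04118 — 2 statements merged into one kernel-verified Lean document; each statement's English description precedes it below -/
import Mathlib

section
/- Let $X$ be a $p \times p$ real matrix with operator norm $\|X\| < 1$. Then $X - \mathrm{Id}_p$ is invertible, and the matrix $Y = (X + \mathrm{Id}_p)(X - \mathrm{Id}_p)^{-1}$ satisfies $Y^t + Y < 0$ (i.e. $-(Y^t + Y)$ is positive definite). -/
/-!
Write `S = (X - 1)⁻¹` and `Y = (X + 1) S`. Since `Sᴴ (X - 1)ᴴ = 1 = (X - 1) S`, both `Yᴴ` and `Y`
can be written as `Sᴴ (⋯) S`, and summing gives `-(Yᴴ + Y) = Sᴴ (2 (1 - Xᴴ X)) S`. The condition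
`‖X‖ < 1` makes `1 - X` invertible (Neumann series) and `1 - Xᴴ X` positive definite, since its
quadratic form is `‖v‖² - ‖X v‖²`; congruence by the invertible `S` preserves positive definiteness.
-/

open scoped ComplexOrder

namespace Matrix

variable {𝕜 : Type*} [RCLike 𝕜] {n : Type*} [Fintype n] [DecidableEq n]

lemma isUnit_one_sub_of_norm_toEuclideanCLM_lt_one {X : Matrix n n 𝕜}
    (hX : ‖toEuclideanCLM (𝕜 := 𝕜) X‖ < 1) : IsUnit (1 - X) := by
  simpa using (Units.oneSub _ hX).isUnit.map (toEuclideanCLM (𝕜 := 𝕜) (n := n)).symm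

lemma star_dotProduct_mulVec_eq_inner_toEuclideanCLM (M : Matrix n n 𝕜) (x : n → 𝕜) :
    star x ⬝ᵥ (M *ᵥ x) =
      inner 𝕜 (WithLp.toLp 2 x) (toEuclideanCLM (𝕜 := 𝕜) M (WithLp.toLp 2 x)) := by
  rw [toEuclideanCLM_toLp, EuclideanSpace.inner_toLp_toLp, dotProduct_comm]

lemma posDef_one_sub_conjTranspose_mul_self {X : Matrix n n 𝕜}
    (hX : ‖toEuclideanCLM (𝕜 := 𝕜) X‖ < 1) : (1 - Xᴴ * X).PosDef := by
  set T := toEuclideanCLM (𝕜 := 𝕜) X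
  refine .of_dotProduct_mulVec_pos (by simp [IsHermitian, conjTranspose_sub]) fun x hx => ?_
  set v := WithLp.toLp 2 x
  have hv : v ≠ 0 := by simpa [v] using hx
  have hTv : ‖T v‖ < ‖v‖ := calc
    ‖T v‖ ≤ ‖T‖ * ‖v‖ := T.le_opNorm v
    _ < ‖v‖ := by simpa using mul_lt_mul_of_pos_right hX (norm_pos_iff.mpr hv)
  have hquad : star x ⬝ᵥ ((1 - Xᴴ * X) *ᵥ x) = ((‖v‖ ^ 2 - ‖T v‖ ^ 2 : ℝ) : 𝕜) := by
    rw [star_dotProduct_mulVec_eq_inner_toEuclideanCLM, map_sub, map_mul, map_one,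
      ← star_eq_conjTranspose, map_star]
    simp [inner_sub_right, ContinuousLinearMap.star_eq_adjoint,
      ContinuousLinearMap.adjoint_inner_right, inner_self_eq_norm_sq_to_K, T, v]
  rw [hquad, RCLike.ofReal_pos, sub_pos]
  gcongr

lemma neg_conjTranspose_add_self_cayley {R : Type*} [CommRing R] [StarRing R] {X : Matrix n n R}
    (hX : IsUnit (X - 1)) :
    -(((X + 1) * (X - 1)⁻¹)ᴴ + (X + 1) * (X - 1)⁻¹) =
      (X - 1)⁻¹ᴴ * (2 • (1 - Xᴴ * X)) * (X - 1)⁻¹ := by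
  set S := (X - 1)⁻¹
  have hdet := (isUnit_iff_isUnit_det _).mp hX
  have hright : (X - 1) * S = 1 := mul_nonsing_inv _ hdet
  have hleft : Sᴴ * (X - 1)ᴴ = 1 := by rw [← conjTranspose_mul, hright, conjTranspose_one]
  calc -(((X + 1) * S)ᴴ + (X + 1) * S)
      = -(Sᴴ * (X + 1)ᴴ * ((X - 1) * S) + Sᴴ * (X - 1)ᴴ * ((X + 1) * S)) := by
        rw [hright, hleft, conjTranspose_mul, mul_one, one_mul]
    _ = Sᴴ * (2 • (1 - Xᴴ * X)) * S := by
        simp only [conjTranspose_add, conjTranspose_sub, conjTranspose_one]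
        noncomm_ring

end Matrix

open Matrix in
theorem cayley_transform_negdef {p : ℕ} (X : Matrix (Fin p) (Fin p) ℝ)
    (hX : ‖Matrix.toEuclideanCLM (𝕜 := ℝ) X‖ < 1) :
    IsUnit (X - 1) ∧
    (-((((X + 1) * (X - 1)⁻¹)ᵀ) + (X + 1) * (X - 1)⁻¹)).PosDef := by
  have hunit : IsUnit (X - 1) := by
    simpa using (isUnit_one_sub_of_norm_toEuclideanCLM_lt_one hX).neg
  refine ⟨hunit, ?_⟩
  rw [← conjTranspose_eq_transpose_of_trivial, neg_conjTranspose_add_self_cayley hunit]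
  exact ((posDef_one_sub_conjTranspose_mul_self hX).smul two_pos).conjTranspose_mul_mul_same
    (mulVec_injective_of_isUnit (isUnit_nonsing_inv_iff.mpr hunit))
end

section
/- A $p \times p$ real matrix $A$ is an extreme point of the closed unit ball $\overline{\mathcal{B}}_{p,p} = \{X \in M_{p,p}(\mathbb{R}) : \|X\| \le 1\}$ (with respect to the operator norm) if and only if $A$ is orthogonal. -/
/-!
An isometry `T` is extreme: if `T = (X₁ + X₂) / 2` with `‖Xᵢ‖ ≤ 1`, then for every `x` the vector
`T x` of norm `‖x‖` is the midpoint of `X₁ x` and `X₂ x` in the ball of radius `‖x‖`, so strict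
convexity of the Euclidean norm forces `X₁ x = X₂ x`.

Conversely, let `T` be extreme and `v` a unit eigenvector of `T†T`. If `‖T v‖ < 1`, pick `w ≠ 0`
with `T† w ∈ ℝ v` (a preimage of `v` under `T†`, or a vector of `ker T†` when `v ∉ range T†`).
Redefining `T` on the line `ℝ v` by `v ↦ T v ± ε w` keeps the image of `v⟂` orthogonal to the
new value, so for small `ε > 0` both perturbations stay in the unit ball and `T` is their midpoint.
Hence `‖T v‖ = 1` on an orthonormal eigenbasis of `T†T`, that is `T†T = 1`.
-/

open Metric ContinuousLinearMap
open scoped RealInnerProductSpace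

section Extreme

variable {𝕜 E F L : Type*} [Field 𝕜] [LinearOrder 𝕜] [IsStrictOrderedRing 𝕜]
  [AddCommGroup E] [Module 𝕜 E] [AddCommGroup F] [Module 𝕜 F]

theorem eq_zero_of_mem_extremePoints_of_add_mem_of_sub_mem {A : Set E} {x y : E}
    (hx : x ∈ A.extremePoints 𝕜) (hadd : x + y ∈ A) (hsub : x - y ∈ A) : y = 0 := by
  have hmid : x ∈ openSegment 𝕜 (x + y) (x - y) :=
    ⟨1 / 2, 1 / 2, by norm_num, by norm_num, by norm_num, by module⟩
  simpa using hx.2 hadd hsub hmid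

theorem mem_extremePoints_preimage_iff [EquivLike L E F] [LinearEquivClass L 𝕜 E F]
    (f : L) {s : Set F} {x : E} :
    x ∈ (f ⁻¹' s).extremePoints 𝕜 ↔ f x ∈ s.extremePoints 𝕜 := by
  rw [← (EquivLike.injective f).mem_set_image, image_extremePoints,
    (EquivLike.surjective f).image_preimage]

end Extreme

theorem LinearMap.exists_ne_zero_apply_mem_span_singleton {K V : Type*} [Field K]
    [AddCommGroup V] [Module K V] [FiniteDimensional K V] (f : V →ₗ[K] V) {v : V}
    (hv : v ≠ 0) : ∃ w ≠ 0, f w ∈ K ∙ v := by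
  by_cases hrange : v ∈ LinearMap.range f
  · obtain ⟨w, rfl⟩ := hrange
    exact ⟨w, by rintro rfl; simp at hv, Submodule.mem_span_singleton_self _⟩
  · have hnotinj : ¬ Function.Injective f := fun hinj ↦
      hrange (LinearMap.injective_iff_surjective.mp hinj v)
    obtain ⟨w, hw, hw0⟩ := (Submodule.ne_bot_iff _).mp (mt LinearMap.ker_eq_bot.mp hnotinj)
    exact ⟨w, hw0, by simp [LinearMap.mem_ker.mp hw]⟩

theorem ContinuousLinearMap.mem_extremePoints_closedBall_of_norm_map {E F : Type*}
    [SeminormedAddCommGroup E] [NormedSpace ℝ E] [NormedAddCommGroup F] [NormedSpace ℝ F]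
    [StrictConvexSpace ℝ F] {T : E →L[ℝ] F} (hT : ∀ x, ‖T x‖ = ‖x‖) :
    T ∈ (closedBall (0 : E →L[ℝ] F) 1).extremePoints ℝ := by
  refine ⟨mem_closedBall_zero_iff.mpr (opNorm_le_bound _ zero_le_one fun x ↦ by simp [hT]), ?_⟩
  rintro X₁ hX₁ X₂ hX₂ ⟨a, b, ha, hb, hab, rfl⟩
  rw [mem_closedBall_zero_iff] at hX₁ hX₂
  have hX : X₁ = X₂ := by
    ext x
    by_contra hne
    have hlt := norm_combo_lt_of_ne ((X₁.le_of_opNorm_le hX₁ x).trans_eq (one_mul _))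
      ((X₂.le_of_opNorm_le hX₂ x).trans_eq (one_mul _)) hne ha hb hab
    simp [← hT x] at hlt
  subst hX
  rw [← add_smul, hab, one_smul]

section InnerProductSpace

variable {E : Type*} [NormedAddCommGroup E] [InnerProductSpace ℝ E]

/-- The operator agrees with `T` on `v⟂` and sends `v` to `u`; the condition on `T† u` makes
`T (v⟂)` orthogonal to `u`, so Pythagoras applies on both sides. -/
theorem ContinuousLinearMap.norm_add_smulRight_sub_le_one [CompleteSpace E] {F : Type*}
    [NormedAddCommGroup F] [InnerProductSpace ℝ F] [CompleteSpace F] {T : E →L[ℝ] F}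
    (hT : ‖T‖ ≤ 1) {v : E} (hv : ‖v‖ = 1) {u : F} (hu : ‖u‖ ≤ 1) (hTu : adjoint T u ∈ ℝ ∙ v) :
    ‖T + (innerSL ℝ v).smulRight (u - T v)‖ ≤ 1 := by
  obtain ⟨c, hc⟩ := Submodule.mem_span_singleton.mp hTu
  refine opNorm_le_bound _ zero_le_one fun x ↦ ?_
  set α := ⟪v, x⟫
  set y := x - α • v
  have hvy : ⟪v, y⟫ = 0 := by
    simp [y, inner_sub_right, real_inner_smul_right, hv, α]
  have hTy : ⟪T y, α • u⟫ = 0 := by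
    rw [real_inner_smul_right, ← adjoint_inner_right, ← hc, real_inner_smul_right,
      real_inner_comm, hvy]
    ring
  have happly : (T + (innerSL ℝ v).smulRight (u - T v)) x = T y + α • u := by
    simp only [y, add_apply, smulRight_apply, innerSL_apply_apply, map_sub, map_smul, smul_sub]
    abel
  have hx : ‖x‖ ^ 2 = ‖y‖ ^ 2 + α ^ 2 := by
    have : x = y + α • v := by simp [y]
    rw [this, norm_add_sq_real, real_inner_smul_right, real_inner_comm, hvy, norm_smul, hv]
    simp
  have hle : ‖T y + α • u‖ ^ 2 ≤ ‖x‖ ^ 2 := by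
    have hTy' : ‖T y‖ ≤ ‖y‖ := (T.le_of_opNorm_le hT y).trans_eq (one_mul _)
    have hαu : ‖α • u‖ ≤ |α| := by
      simpa [norm_smul] using mul_le_of_le_one_right (abs_nonneg α) hu
    rw [norm_add_sq_real, hTy, hx, mul_zero, add_zero, ← sq_abs α]
    gcongr
  rw [one_mul, happly]
  exact pow_le_pow_iff_left₀ (norm_nonneg _) (norm_nonneg _) two_ne_zero |>.mp hle

theorem ContinuousLinearMap.norm_apply_eq_one_of_mem_extremePoints_closedBall
    [FiniteDimensional ℝ E] {T : E →L[ℝ] E}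
    (hT : T ∈ (closedBall (0 : E →L[ℝ] E) 1).extremePoints ℝ) {v : E} (hv : ‖v‖ = 1)
    (hTv : adjoint T (T v) ∈ ℝ ∙ v) : ‖T v‖ = 1 := by
  have hT1 : ‖T‖ ≤ 1 := mem_closedBall_zero_iff.mp hT.1
  refine le_antisymm ((T.le_of_opNorm_le hT1 v).trans_eq (by rw [hv, one_mul])) ?_
  by_contra! hlt
  obtain ⟨w, hw0, hTw⟩ := (adjoint T : E →ₗ[ℝ] E).exists_ne_zero_apply_mem_span_singleton
    (norm_ne_zero_iff.mp (hv.trans_ne one_ne_zero))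
  set ε := (1 - ‖T v‖) / ‖w‖
  have hε : 0 < ε := div_pos (by linarith) (norm_pos_iff.mpr hw0)
  have hperturb : ∀ s : ℝ, |s| ≤ ε →
      T + (innerSL ℝ v).smulRight (s • w) ∈ closedBall (0 : E →L[ℝ] E) 1 := by
    intro s hs
    have hnorm : ‖T v + s • w‖ ≤ 1 := calc
      ‖T v + s • w‖ ≤ ‖T v‖ + |s| * ‖w‖ := by
        simpa [norm_smul] using norm_add_le (T v) (s • w)
      _ ≤ ‖T v‖ + ε * ‖w‖ := by gcongr
      _ = 1 := by rw [div_mul_cancel₀ _ (norm_ne_zero_iff.mpr hw0)]; ring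
    have hmem : adjoint T (T v + s • w) ∈ ℝ ∙ v := by
      rw [map_add, map_smul]
      exact add_mem hTv (Submodule.smul_mem _ s hTw)
    simpa using norm_add_smulRight_sub_le_one hT1 hv hnorm hmem
  have hsub : T - (innerSL ℝ v).smulRight (ε • w) = T + (innerSL ℝ v).smulRight ((-ε) • w) := by
    ext; simp [sub_eq_add_neg]
  have hzero := eq_zero_of_mem_extremePoints_of_add_mem_of_sub_mem hT
    (hperturb ε (abs_of_pos hε).le) (hsub ▸ hperturb (-ε) (by rw [abs_neg, abs_of_pos hε]))
  have := congrArg (fun X : E →L[ℝ] E ↦ X v) hzero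
  simp [hv, hε.ne', hw0] at this

theorem ContinuousLinearMap.adjoint_comp_self_eq_one_of_mem_extremePoints_closedBall
    [FiniteDimensional ℝ E] {T : E →L[ℝ] E}
    (hT : T ∈ (closedBall (0 : E →L[ℝ] E) 1).extremePoints ℝ) : adjoint T ∘L T = 1 := by
  have hsym := T.isPositive_adjoint_comp_self.isSymmetric
  let b := hsym.eigenvectorBasis rfl
  have hfix : ∀ i, (adjoint T ∘L T) (b i) = b i := by
    intro i
    have happ : (adjoint T ∘L T) (b i) = hsym.eigenvalues rfl i • b i :=
      hsym.apply_eigenvectorBasis rfl i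
    have hbi : ‖b i‖ = 1 := b.orthonormal.1 i
    have hTb : ‖T (b i)‖ = 1 := norm_apply_eq_one_of_mem_extremePoints_closedBall hT hbi
      (by rw [← comp_apply, happ]
          exact Submodule.smul_mem _ _ (Submodule.mem_span_singleton_self _))
    have heig : hsym.eigenvalues rfl i = 1 := by
      have := congrArg (⟪b i, ·⟫) happ
      simp only [comp_apply, adjoint_inner_right, real_inner_self_eq_norm_sq, hTb, hbi,
        real_inner_smul_right] at this
      linarith
    rw [happ, heig, one_smul]
  exact coe_injective (b.toBasis.ext fun i ↦ by simpa using hfix i)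

theorem ContinuousLinearMap.mem_extremePoints_closedBall_iff [FiniteDimensional ℝ E]
    {T : E →L[ℝ] E} :
    T ∈ (closedBall (0 : E →L[ℝ] E) 1).extremePoints ℝ ↔ adjoint T ∘L T = 1 :=
  ⟨adjoint_comp_self_eq_one_of_mem_extremePoints_closedBall,
    fun h ↦ mem_extremePoints_closedBall_of_norm_map (T.norm_map_iff_adjoint_comp_self.mpr h)⟩

end InnerProductSpace

theorem extreme_point_unit_ball_iff_orthogonal {p : ℕ}
    (A : Matrix (Fin p) (Fin p) ℝ) :
    A ∈ Set.extremePoints ℝ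
        {X : Matrix (Fin p) (Fin p) ℝ | ‖Matrix.toEuclideanCLM (𝕜 := ℝ) X‖ ≤ 1} ↔
      A ∈ Matrix.orthogonalGroup (Fin p) ℝ := by
  have hball : {X : Matrix (Fin p) (Fin p) ℝ | ‖Matrix.toEuclideanCLM (𝕜 := ℝ) X‖ ≤ 1} =
      Matrix.toEuclideanCLM (𝕜 := ℝ) (n := Fin p) ⁻¹' closedBall 0 1 := by
    ext X; simp
  rw [hball, mem_extremePoints_preimage_iff, mem_extremePoints_closedBall_iff,
    Matrix.mem_orthogonalGroup_iff', ← Matrix.conjTranspose_eq_transpose_of_trivial,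
    ← Matrix.star_eq_conjTranspose, ← star_eq_adjoint, ← mul_def, ← map_star, ← map_mul,
    map_eq_one_iff _ (EquivLike.injective _)]
end
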